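/- Let X be a set, h : X → ℝ bounded below, (f_i) self-maps of X with integers d_i ≥ 2 and uniform bound c on |h(f_i(x))/d_i − h(x)|. Suppose moreover that for every real number M the sublevel set {y ∈ X : h(y) ≤ M} is finite (Northcott property). Then for x ∈ X, the canonical height ĥ(x) = 0 if and only if the forward orbit {x, f_1(x), f_2(f_1(x)), …} is finite. -/

import Mathlib

/-!
Writing `D n = d 1 ⋯ d n` and `a n = h (x_n) / D n` along the orbit, the uniform comparison gives
`|a (n+1) - a n| ≤ c / D n`, and since `D` at least doubles at each step these increments sum to at
most `2c / D n`; hence `|a n - ĥ(x)| ≤ 2c / D n`. If `ĥ(x) = 0`, this says `h (x_n) ≤ 2c` for all `n`,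
so the orbit lies in a finite sublevel set. Conversely, on a finite orbit `h` takes finitely many
values, and a bounded sequence divided by `D n → ∞` tends to `0`.
-/

open Filter Finset

/-- `orbitFrom f k n x = f (k+n) (⋯ (f (k+1) x))`, the composite applying `f (k+1)` first. -/
def orbitFrom {X : Type*} (f : ℕ → X → X) (k : ℕ) : ℕ → X → X
  | 0 => fun x => x
  | n + 1 => fun x => f (k + n + 1) (orbitFrom f k n x)

/-- `prodFrom d k n = d (k+1) * ⋯ * d (k+n)`. -/
def prodFrom (d : ℕ → ℕ) (k n : ℕ) : ℕ := ∏ i ∈ Finset.range n, d (k + i + 1)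

open Topology

section prodFrom

variable {d : ℕ → ℕ}

lemma prodFrom_succ (k n : ℕ) :
    prodFrom d k (n + 1) = prodFrom d k n * d (k + n + 1) :=
  prod_range_succ _ _

lemma prodFrom_pos (hd : ∀ i, 2 ≤ d i) (k n : ℕ) : 0 < prodFrom d k n :=
  prod_pos fun _ _ => two_pos.trans_le (hd _)

lemma two_pow_le_prodFrom (hd : ∀ i, 2 ≤ d i) (k n : ℕ) : 2 ^ n ≤ prodFrom d k n := by
  simpa [prodFrom] using prod_le_prod' fun i (_ : i ∈ range n) => hd (k + i + 1)

lemma tendsto_prodFrom_atTop (hd : ∀ i, 2 ≤ d i) (k : ℕ) :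
    Tendsto (prodFrom d k) atTop atTop :=
  tendsto_atTop_mono (fun _ => Nat.lt_two_pow_self.le.trans (two_pow_le_prodFrom hd k _))
    tendsto_id

end prodFrom

lemma abs_sub_le_of_tendsto_of_abs_sub_succ_le {a P : ℕ → ℝ} {c L : ℝ} (hP : ∀ n, 0 < P n)
    (hP2 : ∀ n, 2 * P n ≤ P (n + 1)) (hstep : ∀ n, |a (n + 1) - a n| ≤ c / P n)
    (ha : Tendsto a atTop (𝓝 L)) (n : ℕ) : |a n - L| ≤ 2 * c / P n := by
  have hc : 0 ≤ c := by
    have := (abs_nonneg _).trans (hstep 0)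
    rwa [le_div_iff₀ (hP 0), zero_mul] at this
  have hgrow : ∀ m, 2 ^ m * P n ≤ P (n + m) := by
    intro m
    induction m with
    | zero => simp
    | succ m ih =>
      calc 2 ^ (m + 1) * P n = 2 * (2 ^ m * P n) := by ring
        _ ≤ 2 * P (n + m) := by gcongr
        _ ≤ P (n + (m + 1)) := hP2 _
  have hshift : Tendsto (fun m => a (n + m)) atTop (𝓝 L) :=
    ha.comp (tendsto_atTop_mono (Nat.le_add_left · n) tendsto_id)
  have hgeom : ∀ m, dist (a (n + m)) (a (n + (m + 1))) ≤ 2 * c / P n / 2 / 2 ^ m := by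
    intro m
    calc dist (a (n + m)) (a (n + (m + 1))) = |a (n + m + 1) - a (n + m)| := by
          rw [dist_comm, Real.dist_eq, add_assoc]
      _ ≤ c / P (n + m) := hstep _
      _ ≤ c / (2 ^ m * P n) :=
          div_le_div_of_nonneg_left hc (mul_pos (by positivity) (hP n)) (hgrow m)
      _ = 2 * c / P n / 2 / 2 ^ m := by field_simp
  simpa [Real.dist_eq] using dist_le_of_le_geometric_two_of_tendsto₀ hgeom hshift

section orbit

variable {X : Type*} {h : X → ℝ} {f : ℕ → X → X} {d : ℕ → ℕ} {c : ℝ}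

lemma abs_height_orbit_succ_div_sub_le (hd : ∀ i, 2 ≤ d i)
    (hb : ∀ i x, |h (f i x) / (d i : ℝ) - h x| ≤ c) (x : X) (n : ℕ) :
    |h (orbitFrom f 0 (n + 1) x) / (prodFrom d 0 (n + 1) : ℝ)
      - h (orbitFrom f 0 n x) / (prodFrom d 0 n : ℝ)| ≤ c / prodFrom d 0 n := by
  have hP : (0 : ℝ) < prodFrom d 0 n := by exact_mod_cast prodFrom_pos hd 0 n
  have horbit : orbitFrom f 0 (n + 1) x = f (n + 1) (orbitFrom f 0 n x) := by
    simp [orbitFrom]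
  rw [horbit, prodFrom_succ, zero_add, Nat.cast_mul, div_mul_eq_div_div_swap, ← sub_div,
    abs_div, abs_of_pos hP]
  gcongr
  exact hb _ _

lemma abs_height_orbit_div_sub_le (hd : ∀ i, 2 ≤ d i)
    (hb : ∀ i x, |h (f i x) / (d i : ℝ) - h x| ≤ c) {x : X} {L : ℝ}
    (hL : Tendsto (fun n => h (orbitFrom f 0 n x) / (prodFrom d 0 n : ℝ)) atTop (𝓝 L)) (n : ℕ) :
    |h (orbitFrom f 0 n x) / (prodFrom d 0 n : ℝ) - L| ≤ 2 * c / prodFrom d 0 n := by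
  refine abs_sub_le_of_tendsto_of_abs_sub_succ_le (fun n => ?_) (fun n => ?_)
    (abs_height_orbit_succ_div_sub_le hd hb x) hL n
  · exact_mod_cast prodFrom_pos hd 0 n
  · rw [prodFrom_succ, zero_add, mul_comm]
    exact_mod_cast Nat.mul_le_mul_left _ (hd _)

lemma height_orbit_le_of_tendsto_zero (hd : ∀ i, 2 ≤ d i)
    (hb : ∀ i x, |h (f i x) / (d i : ℝ) - h x| ≤ c) {x : X}
    (hL : Tendsto (fun n => h (orbitFrom f 0 n x) / (prodFrom d 0 n : ℝ)) atTop (𝓝 0)) (n : ℕ) :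
    h (orbitFrom f 0 n x) ≤ 2 * c := by
  have hP : (0 : ℝ) < prodFrom d 0 n := by exact_mod_cast prodFrom_pos hd 0 n
  have := (abs_le.mp (abs_height_orbit_div_sub_le hd hb hL n)).2
  rwa [sub_zero, div_le_div_iff_of_pos_right hP] at this

lemma tendsto_height_orbit_div_of_finite (hd : ∀ i, 2 ≤ d i) {x : X}
    (hfin : (Set.range fun n => orbitFrom f 0 n x).Finite) :
    Tendsto (fun n => h (orbitFrom f 0 n x) / (prodFrom d 0 n : ℝ)) atTop (𝓝 0) := by
  have hvalues := hfin.image h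
  obtain ⟨b, hb⟩ := hvalues.bddBelow
  obtain ⟨B, hB⟩ := hvalues.bddAbove
  refine tendsto_bdd_div_atTop_nhds_zero (b := b) (B := B)
    (Eventually.of_forall fun n => hb ⟨_, ⟨n, rfl⟩, rfl⟩)
    (Eventually.of_forall fun n => hB ⟨_, ⟨n, rfl⟩, rfl⟩) ?_
  exact tendsto_natCast_atTop_atTop.comp (tendsto_prodFrom_atTop hd 0)

end orbit

theorem stmt7_general {X : Type*} (h : X → ℝ) (f : ℕ → X → X) (d : ℕ → ℕ)
    (hd : ∀ i, 2 ≤ d i) (c : ℝ)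
    (hb : ∀ i x, |h (f i x) / (d i : ℝ) - h x| ≤ c)
    (hNorthcott : ∀ M : ℝ, {y : X | h y ≤ M}.Finite) (x : X) (L : ℝ)
    (hL : Tendsto (fun n => h (orbitFrom f 0 n x) / (prodFrom d 0 n : ℝ)) atTop (nhds L)) :
    L = 0 ↔ (Set.range fun n => orbitFrom f 0 n x).Finite := by
  constructor
  · rintro rfl
    refine (hNorthcott (2 * c)).subset ?_
    rintro _ ⟨n, rfl⟩
    exact height_orbit_le_of_tendsto_zero hd hb hL n
  · intro hfin
    exact tendsto_nhds_unique hL (tendsto_height_orbit_div_of_finite hd hfin)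

theorem stmt7 {X : Type*} (h : X → ℝ) (f : ℕ → X → X) (d : ℕ → ℕ)
    (hd : ∀ i, 2 ≤ d i) (c : ℝ) (hc : 0 ≤ c)
    (hb : ∀ i x, |h (f i x) / (d i : ℝ) - h x| ≤ c)
    (hbelow : ∃ m : ℝ, ∀ y, m ≤ h y)
    (hNorthcott : ∀ M : ℝ, {y : X | h y ≤ M}.Finite) (x : X) (L : ℝ)
    (hL : Tendsto (fun n => h (orbitFrom f 0 n x) / (prodFrom d 0 n : ℝ)) atTop (nhds L)) :
    L = 0 ↔ (Set.range fun n => orbitFrom f 0 n x).Finite :=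
  stmt7_general h f d hd c hb hNorthcott x L hL
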